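/- In any fair division instance where m = n (the number of goods equals the number of agents) and every agent values every good positively, every EQ1 allocation assigns exactly one good to each agent. -/

import Mathlib

open Finset

/-- An allocation is a partition of the goods among the agents. -/
def isPartition {ι γ : Type*} [Fintype ι] [Fintype γ] [DecidableEq γ]
    (A : ι → Finset γ) : Prop :=
  (∀ i j, i ≠ j → Disjoint (A i) (A j)) ∧ Finset.univ.biUnion A = Finset.univ

/-- Additive value of a bundle. -/
def bundleVal {γ : Type*} (v : γ → ℚ) (S : Finset γ) : ℚ := ∑ g ∈ S, v g

/-- EQ1: for every pair of agents `i, j` with `A i` nonempty, some good can be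
removed from `A i` so that `i`'s value drops to at most `j`'s value. -/
def EQ1 {ι γ : Type*} [DecidableEq γ] (v : ι → γ → ℚ) (A : ι → Finset γ) : Prop :=
  ∀ i j, A i ≠ ∅ → ∃ g ∈ A i, bundleVal (v i) ((A i).erase g) ≤ bundleVal (v j) (A j)

theorem isPartition.sum_card {ι γ : Type*} [Fintype ι] [Fintype γ] [DecidableEq γ]
    {A : ι → Finset γ} (hA : isPartition A) : ∑ i, (A i).card = Fintype.card γ := by
  rw [← card_biUnion fun i _ j _ hij => hA.1 i j hij, hA.2, card_univ]

theorem bundleVal_pos {γ : Type*} {v : γ → ℚ} (hv : ∀ g, 0 < v g) {S : Finset γ}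
    (hS : S.Nonempty) : 0 < bundleVal v S :=
  sum_pos (fun g _ => hv g) hS

/-- EQ1 towards an agent with nothing means that removing one good leaves value `0`. -/
theorem EQ1.card_le_one_of_eq_empty {ι γ : Type*} [DecidableEq γ] {v : ι → γ → ℚ}
    (hv : ∀ i g, 0 < v i g) {A : ι → Finset γ} (hA : EQ1 v A) {j : ι} (hj : A j = ∅)
    (i : ι) : (A i).card ≤ 1 := by
  rcases eq_or_ne (A i) ∅ with hi | hi
  · simp [hi]
  obtain ⟨g, hg, hval⟩ := hA i j hi
  have hrest : (A i).erase g = ∅ := by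
    by_contra hne
    have := bundleVal_pos (hv i) (nonempty_iff_ne_empty.2 hne)
    have hzero : bundleVal (v j) (A j) = 0 := by rw [hj]; exact sum_empty
    linarith
  have := card_erase_add_one hg
  rw [hrest, card_empty] at this
  omega

theorem EQ1.nonempty_of_card_eq {ι γ : Type*} [Fintype ι] [Fintype γ] [DecidableEq γ]
    (hcard : Fintype.card γ = Fintype.card ι) {v : ι → γ → ℚ} (hv : ∀ i g, 0 < v i g)
    {A : ι → Finset γ} (hpart : isPartition A) (hA : EQ1 v A) (j : ι) : (A j).Nonempty := by
  rw [nonempty_iff_ne_empty]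
  intro hj
  have hlt : ∑ i, (A i).card < ∑ _i : ι, 1 :=
    sum_lt_sum (fun i _ => hA.card_le_one_of_eq_empty hv hj i) ⟨j, mem_univ j, by simp [hj]⟩
  simp only [hpart.sum_card, hcard, sum_const, card_univ, smul_eq_mul, mul_one] at hlt
  exact lt_irrefl _ hlt

theorem EQ1.card_eq_one_of_card_eq {ι γ : Type*} [Fintype ι] [Fintype γ] [DecidableEq γ]
    (hcard : Fintype.card γ = Fintype.card ι) {v : ι → γ → ℚ} (hv : ∀ i g, 0 < v i g)
    {A : ι → Finset γ} (hpart : isPartition A) (hA : EQ1 v A) (i : ι) : (A i).card = 1 := by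
  have hsum : ∑ _k : ι, 1 = ∑ k, (A k).card := by
    rw [hpart.sum_card, hcard, sum_const, card_univ, smul_eq_mul, mul_one]
  have hone : ∀ k ∈ univ, 1 ≤ (A k).card :=
    fun k _ => card_pos.2 (hA.nonempty_of_card_eq hcard hv hpart k)
  exact ((sum_eq_sum_iff_of_le hone).1 hsum i (mem_univ i)).symm

/-- when the number of goods equals the number of agents and all
values are positive, every EQ1 allocation gives each agent exactly one good. -/
theorem stmt17 (n : ℕ) (v : Fin n → Fin n → ℚ) (hv : ∀ i g, 0 < v i g)
    (A : Fin n → Finset (Fin n)) (hpart : isPartition A) (heq1 : EQ1 v A) :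
    ∀ i, (A i).card = 1 :=
  heq1.card_eq_one_of_card_eq rfl hv hpart
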